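/- Under the hypotheses of the TRA survivor bound applied to each of two views (each view has relevant survivors bounded by r deterministically and expected noise survivors at most κ), the differential attention vector Δa_i = a_i^{(1)} - λ·a_i^{(2)} satisfies E[H(Δa_i)] ≤ log(1 + 2(r + κ)), and hence lim_{i→∞} E[H(Δa_i)]/log i = 0. -/

import Mathlib

open MeasureTheory
open scoped Classical

/-- Effective entropy: Shannon entropy of the ℓ1-normalized absolute values of a vector
(taken to be 0 when the vector is 0). -/
noncomputable def effEntropy {n : ℕ} (a : Fin n → ℝ) : ℝ :=
  if (∑ j, |a j|) = 0 then 0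
  else -∑ j, (|a j| / ∑ k, |a k|) * Real.log (|a j| / ∑ k, |a k|)

/-!
A vector with `s` nonzero entries has effective entropy at most `log s`: on its support the
normalized weights form a probability vector, and Jensen's inequality for the concave `negMulLog`
with uniform weights gives the bound. The support of `a⁽¹⁾ - λ a⁽²⁾` lies in the union of the two
supports, so its size is at most `R₁ + N₁ + R₂ + N₂ ≤ Y := 2r + N₁ + N₂`. Jensen's inequality for
the concave `log (1 + ·)` then gives `E[H] ≤ E[log (1 + Y)] ≤ log (1 + E[Y]) ≤ log (1 + 2(r + κ))`,
and a bounded sequence divided by `log i` tends to `0`.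
-/

open Finset Real Filter Topology

theorem sum_negMulLog_le_log_card {ι : Type*} {s : Finset ι} {p : ι → ℝ}
    (hp₀ : ∀ i ∈ s, 0 ≤ p i) (hp₁ : ∑ i ∈ s, p i = 1) :
    ∑ i ∈ s, negMulLog (p i) ≤ log #s := by
  have hs : (0 : ℝ) < #s := by
    obtain ⟨i, hi⟩ := nonempty_of_sum_ne_zero (hp₁.trans_ne one_ne_zero)
    exact_mod_cast card_pos.2 ⟨i, hi⟩
  have hjensen := concaveOn_negMulLog.le_map_sum (t := s) (w := fun _ => (#s : ℝ)⁻¹) (p := p)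
    (fun _ _ => by positivity) (by simp [hs.ne']) (fun i hi => Set.mem_Ici.2 (hp₀ i hi))
  simp only [smul_eq_mul, ← mul_sum, hp₁, mul_one] at hjensen
  rw [show negMulLog (#s : ℝ)⁻¹ = (#s : ℝ)⁻¹ * log #s by simp [negMulLog, log_inv]] at hjensen
  exact (mul_le_mul_iff_of_pos_left (inv_pos.2 hs)).1 hjensen

theorem effEntropy_eq_sum_negMulLog {n : ℕ} (a : Fin n → ℝ) (h : ∑ j, |a j| ≠ 0) :
    effEntropy a = ∑ j, negMulLog (|a j| / ∑ k, |a k|) := by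
  simp only [effEntropy, if_neg h, negMulLog, neg_mul, sum_neg_distrib]

theorem effEntropy_nonneg {n : ℕ} (a : Fin n → ℝ) : 0 ≤ effEntropy a := by
  by_cases h : ∑ j, |a j| = 0
  · simp [effEntropy, h]
  rw [effEntropy_eq_sum_negMulLog a h]
  exact sum_nonneg fun j _ => negMulLog_nonneg (by positivity)
    (div_le_one_of_le₀ (single_le_sum (fun k _ => abs_nonneg (a k)) (mem_univ j)) (by positivity))

theorem effEntropy_le_log_card_support {n : ℕ} (a : Fin n → ℝ) :
    effEntropy a ≤ log #{j | a j ≠ 0} := by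
  by_cases h : ∑ j, |a j| = 0
  · simpa [effEntropy, h] using log_natCast_nonneg _
  rw [effEntropy_eq_sum_negMulLog a h]
  have hp_support : ∀ j, |a j| / ∑ k, |a k| ≠ 0 → a j ≠ 0 := fun j hj ha => hj (by simp [ha])
  rw [← sum_filter_of_ne fun j _ hj => hp_support j fun hp => hj (by rw [hp, negMulLog_zero])]
  refine sum_negMulLog_le_log_card (fun j _ => by positivity) ?_
  rw [sum_filter_of_ne fun j _ => hp_support j, ← sum_div, div_self h]

theorem card_support_sub_mul_le {ι R : Type*} [Fintype ι] [Ring R] [DecidableEq R]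
    (f g : ι → R) (c : R) :
    #{j | f j - c * g j ≠ 0} ≤ #{j | f j ≠ 0} + #{j | g j ≠ 0} := by
  refine (card_le_card fun j => ?_).trans (card_union_le _ _)
  simp only [mem_filter, mem_union, mem_univ, true_and]
  contrapose!
  rintro ⟨hf, hg⟩
  simp [hf, hg]

section LogOneAdd

variable {Ω : Type*} [MeasurableSpace Ω] {μ : Measure Ω} {Y : Ω → ℝ}

theorem MeasureTheory.Integrable.log_one_add (hY : Integrable Y μ) (hY₀ : ∀ ω, 0 ≤ Y ω) :
    Integrable (fun ω => log (1 + Y ω)) μ := by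
  refine hY.mono' ?_ (Eventually.of_forall fun ω => ?_)
  · exact (measurable_log.comp_aemeasurable
      (aemeasurable_const.add hY.aemeasurable)).aestronglyMeasurable
  · rw [norm_of_nonneg (log_nonneg (by linarith [hY₀ ω]))]
    linarith [log_le_sub_one_of_pos (show 0 < 1 + Y ω by linarith [hY₀ ω])]

theorem integral_log_one_add_le_log_one_add_integral [IsProbabilityMeasure μ] (hY : Integrable Y μ)
    (hY₀ : ∀ ω, 0 ≤ Y ω) :
    ∫ ω, log (1 + Y ω) ∂μ ≤ log (1 + ∫ ω, Y ω ∂μ) := by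
  have hconcave : ConcaveOn ℝ (Set.Ici 0) fun y : ℝ => log (1 + y) :=
    (strictConcaveOn_log_Ioi.concaveOn.translate_right 1).subset
      (fun y (hy : 0 ≤ y) => show 0 < 1 + y by linarith) (convex_Ici 0)
  have hcont : ContinuousOn (fun y : ℝ => log (1 + y)) (Set.Ici 0) :=
    ContinuousOn.log (by fun_prop) fun y (hy : 0 ≤ y) => (by linarith : (0 : ℝ) < 1 + y).ne'
  exact hconcave.le_map_integral hcont isClosed_Ici (Eventually.of_forall hY₀) hY
    (hY.log_one_add hY₀)

end LogOneAdd

theorem tendsto_div_log_atTop_of_nonneg_of_le {f : ℕ → ℝ} {C : ℝ} (hf₀ : ∀ i, 0 ≤ f i)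
    (hfC : ∀ i, f i ≤ C) : Tendsto (fun i => f i / log i) atTop (𝓝 0) := by
  have hinv : Tendsto (fun i : ℕ => (log i)⁻¹) atTop (𝓝 0) :=
    tendsto_inv_atTop_zero.comp (tendsto_log_atTop.comp tendsto_natCast_atTop_atTop)
  have hbdd : IsBoundedUnder (· ≤ ·) atTop fun i => ‖f i‖ :=
    isBoundedUnder_of ⟨C, fun i => (norm_of_nonneg (hf₀ i)).trans_le (hfC i)⟩
  simpa [div_eq_inv_mul] using hinv.zero_mul_isBoundedUnder_le hbdd

theorem log_natCast_le_log_one_add {n : ℕ} {y : ℝ} (h : (n : ℝ) ≤ y) :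
    log n ≤ log (1 + y) := by
  rcases n.eq_zero_or_pos with rfl | hn
  · rw [Nat.cast_zero] at h ⊢
    rw [log_zero]
    exact log_nonneg (by linarith)
  · exact log_le_log (by exact_mod_cast hn) (by linarith)

theorem effEntropy_sub_mul_le_log_one_add {n : ℕ} (f g : Fin n → ℝ) (c : ℝ) {y : ℝ}
    (hy : (#{j | f j ≠ 0} + #{j | g j ≠ 0} : ℕ) ≤ y) :
    effEntropy (fun j => f j - c * g j) ≤ log (1 + y) :=
  (effEntropy_le_log_card_support _).trans <| log_natCast_le_log_one_add <|
    (Nat.cast_le.2 (card_support_sub_mul_le f g c)).trans hy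

theorem tda_non_dispersive_general {Ω : Type*} [MeasurableSpace Ω]
    (μ : Measure Ω) [IsProbabilityMeasure μ]
    (a₁ a₂ : (i : ℕ) → Ω → (Fin i → ℝ)) (lam : ℝ) (r κ : ℝ)
    (R₁ N₁ R₂ N₂ : (i : ℕ) → Ω → ℕ)
    (hint₁ : ∀ i, Integrable (fun ω => (N₁ i ω : ℝ)) μ)
    (hint₂ : ∀ i, Integrable (fun ω => (N₂ i ω : ℝ)) μ)
    (hsplit₁ : ∀ i ω, (Finset.univ.filter fun j => a₁ i ω j ≠ 0).card = R₁ i ω + N₁ i ω)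
    (hsplit₂ : ∀ i ω, (Finset.univ.filter fun j => a₂ i ω j ≠ 0).card = R₂ i ω + N₂ i ω)
    (hR₁ : ∀ i ω, (R₁ i ω : ℝ) ≤ r) (hR₂ : ∀ i ω, (R₂ i ω : ℝ) ≤ r)
    (hN₁ : ∀ i, ∫ ω, (N₁ i ω : ℝ) ∂μ ≤ κ) (hN₂ : ∀ i, ∫ ω, (N₂ i ω : ℝ) ∂μ ≤ κ) :
    (∀ i : ℕ, ∫ ω, effEntropy (fun j => a₁ i ω j - lam * a₂ i ω j) ∂μ
        ≤ Real.log (1 + 2 * (r + κ)))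
    ∧ Filter.Tendsto
        (fun i : ℕ =>
          (∫ ω, effEntropy (fun j => a₁ i ω j - lam * a₂ i ω j) ∂μ) / Real.log i)
        Filter.atTop (nhds 0) := by
  have hbound : ∀ i : ℕ, ∫ ω, effEntropy (fun j => a₁ i ω j - lam * a₂ i ω j) ∂μ
      ≤ log (1 + 2 * (r + κ)) := by
    intro i
    set Y : Ω → ℝ := fun ω => 2 * r + N₁ i ω + N₂ i ω
    have hY : Integrable Y μ := ((integrable_const _).add (hint₁ i)).add (hint₂ i)
    have hY₀ : ∀ ω, 0 ≤ Y ω := fun ω => by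
      have := (Nat.cast_nonneg (α := ℝ) (R₁ i ω)).trans (hR₁ i ω)
      positivity
    have hpointwise : ∀ ω, effEntropy (fun j => a₁ i ω j - lam * a₂ i ω j) ≤ log (1 + Y ω) :=
      fun ω => effEntropy_sub_mul_le_log_one_add _ _ _ <| by
        rw [hsplit₁, hsplit₂]
        push_cast
        linarith [hR₁ i ω, hR₂ i ω]
    have hEY : ∫ ω, Y ω ∂μ = 2 * r + ∫ ω, (N₁ i ω : ℝ) ∂μ + ∫ ω, (N₂ i ω : ℝ) ∂μ := by
      rw [integral_add (f := fun ω => 2 * r + (N₁ i ω : ℝ)) ((integrable_const _).add (hint₁ i))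
        (hint₂ i), integral_add (integrable_const _) (hint₁ i), integral_const]
      simp
    calc ∫ ω, effEntropy (fun j => a₁ i ω j - lam * a₂ i ω j) ∂μ
        ≤ ∫ ω, log (1 + Y ω) ∂μ :=
          integral_mono_of_nonneg (ae_of_all _ fun ω => effEntropy_nonneg _)
            (hY.log_one_add hY₀) (ae_of_all _ hpointwise)
      _ ≤ log (1 + ∫ ω, Y ω ∂μ) := integral_log_one_add_le_log_one_add_integral hY hY₀
      _ ≤ log (1 + 2 * (r + κ)) :=
          log_le_log (by linarith [(integral_nonneg hY₀ : 0 ≤ ∫ ω, Y ω ∂μ)])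
            (by linarith [hN₁ i, hN₂ i])
  exact ⟨hbound, tendsto_div_log_atTop_of_nonneg_of_le
    (fun i => integral_nonneg fun ω => effEntropy_nonneg _) hbound⟩

/-- **Corollary 4.7 (TDA is non-dispersive).** If each of the two views has at most r
relevant survivors deterministically and expected noise survivors at most κ, then the
differential vector Δa_i = a_i⁽¹⁾ - λ·a_i⁽²⁾ satisfies E[H(Δa_i)] ≤ log(1 + 2(r+κ)),
and hence E[H(Δa_i)]/log i → 0. -/
theorem tda_non_dispersive {Ω : Type*} [MeasurableSpace Ω]
    (μ : Measure Ω) [IsProbabilityMeasure μ]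
    (a₁ a₂ : (i : ℕ) → Ω → (Fin i → ℝ)) (lam : ℝ) (r κ : ℝ)
    (R₁ N₁ R₂ N₂ : (i : ℕ) → Ω → ℕ)
    (hmeas₁ : ∀ i, Measurable (a₁ i)) (hmeas₂ : ∀ i, Measurable (a₂ i))
    (hint₁ : ∀ i, Integrable (fun ω => (N₁ i ω : ℝ)) μ)
    (hint₂ : ∀ i, Integrable (fun ω => (N₂ i ω : ℝ)) μ)
    (hsplit₁ : ∀ i ω, (Finset.univ.filter fun j => a₁ i ω j ≠ 0).card = R₁ i ω + N₁ i ω)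
    (hsplit₂ : ∀ i ω, (Finset.univ.filter fun j => a₂ i ω j ≠ 0).card = R₂ i ω + N₂ i ω)
    (hR₁ : ∀ i ω, (R₁ i ω : ℝ) ≤ r) (hR₂ : ∀ i ω, (R₂ i ω : ℝ) ≤ r)
    (hN₁ : ∀ i, ∫ ω, (N₁ i ω : ℝ) ∂μ ≤ κ) (hN₂ : ∀ i, ∫ ω, (N₂ i ω : ℝ) ∂μ ≤ κ) :
    (∀ i : ℕ, ∫ ω, effEntropy (fun j => a₁ i ω j - lam * a₂ i ω j) ∂μ
        ≤ Real.log (1 + 2 * (r + κ)))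
    ∧ Filter.Tendsto
        (fun i : ℕ =>
          (∫ ω, effEntropy (fun j => a₁ i ω j - lam * a₂ i ω j) ∂μ) / Real.log i)
        Filter.atTop (nhds 0) :=
  tda_non_dispersive_general μ a₁ a₂ lam r κ R₁ N₁ R₂ N₂ hint₁ hint₂ hsplit₁ hsplit₂ hR₁ hR₂ hN₁ hN₂
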